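/- arXiv:1807.02801 — 2 statements merged into one kernel-verified Lean document; each statement's English description precedes it below -/
import Mathlib

section
/- Let r, ℓ > 0, w < 0, 0 ≤ m ≤ M, and suppose (R, W) solves Ṙ = W/√(1 + W² + ℓR⁻²), Ẇ = ℓ/(R³√(1 + W² + ℓR⁻²)) + m(t,R)/R², with R(0) = r, W(0) = w, R(t) > 0 for all t ≥ 0, and 0 ≤ m(t,R(t)) ≤ M. If W(t) ≤ 0 for all t ∈ [0, T₀] then W(t)² + ℓ R(t)⁻² ≤ w² + ℓ r⁻² for all t ∈ [0, T₀]. -/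
/-! Along the characteristics the centrifugal terms in the derivative of `W² + ℓ R⁻²` cancel,
whatever the Lorentz factor, leaving `2 W m R⁻²`. This is `≤ 0` while `W ≤ 0`, since `m ≥ 0`,
so the energy is antitone on `[0, T₀]`. -/

lemma hasDerivAt_sq_add_mul_inv_sq {R W : ℝ → ℝ} {ℓ γ F t : ℝ}
    (hR : HasDerivAt R (W t / γ) t) (hW : HasDerivAt W (ℓ / (R t ^ 3 * γ) + F) t)
    (hRt : R t ≠ 0) :
    HasDerivAt (fun s => W s ^ 2 + ℓ * (R s)⁻¹ ^ 2) (2 * W t * F) t := by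
  refine ((hW.pow 2).add (((hR.inv hRt).pow 2).const_mul ℓ)).congr_deriv ?_
  simp only [Pi.inv_apply]
  ring

theorem kinetic_energy_nonincreasing_general (r ℓ w M T₀ : ℝ)
    (R W : ℝ → ℝ) (m : ℝ → ℝ → ℝ)
    (hRderiv : ∀ t ≥ (0:ℝ), HasDerivAt R
      (W t / Real.sqrt (1 + W t ^ 2 + ℓ * (R t)⁻¹ ^ 2)) t)
    (hWderiv : ∀ t ≥ (0:ℝ), HasDerivAt W
      (ℓ / (R t ^ 3 * Real.sqrt (1 + W t ^ 2 + ℓ * (R t)⁻¹ ^ 2))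
        + m t (R t) / R t ^ 2) t)
    (hR0 : R 0 = r) (hW0 : W 0 = w)
    (hRpos : ∀ t ≥ (0:ℝ), 0 < R t)
    (hm : ∀ t ≥ (0:ℝ), 0 ≤ m t (R t) ∧ m t (R t) ≤ M)
    (hWneg : ∀ t ∈ Set.Icc 0 T₀, W t ≤ 0) :
    ∀ t ∈ Set.Icc 0 T₀,
      W t ^ 2 + ℓ * (R t)⁻¹ ^ 2 ≤ w ^ 2 + ℓ * r⁻¹ ^ 2 := by
  have hE : ∀ t ≥ (0:ℝ), HasDerivAt (fun s => W s ^ 2 + ℓ * (R s)⁻¹ ^ 2)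
      (2 * W t * (m t (R t) / R t ^ 2)) t := fun t ht =>
    hasDerivAt_sq_add_mul_inv_sq (hRderiv t ht) (hWderiv t ht) (hRpos t ht).ne'
  have hanti : AntitoneOn (fun s => W s ^ 2 + ℓ * (R s)⁻¹ ^ 2) (Set.Icc 0 T₀) := by
    refine antitoneOn_of_hasDerivWithinAt_nonpos (f' := fun t => 2 * W t * (m t (R t) / R t ^ 2))
      (convex_Icc 0 T₀)
      (fun t ht => (hE t ht.1).continuousAt.continuousWithinAt) (fun t ht => ?_) (fun t ht => ?_)
    all_goals rw [interior_Icc] at ht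
    · exact (hE t ht.1.le).hasDerivWithinAt
    · have hWt : 2 * W t ≤ 0 := by linarith [hWneg t (Set.Ioo_subset_Icc_self ht)]
      have hRt := hRpos t ht.1.le
      exact mul_nonpos_of_nonpos_of_nonneg hWt (div_nonneg (hm t ht.1.le).1 (by positivity))
  intro t ht
  simpa only [hR0, hW0] using hanti ⟨le_rfl, ht.1.trans ht.2⟩ ht ht.1

theorem kinetic_energy_nonincreasing (r ℓ w M T₀ : ℝ)
    (hr : 0 < r) (hl : 0 < ℓ) (hw : w < 0) (hT : 0 ≤ T₀)
    (R W : ℝ → ℝ) (m : ℝ → ℝ → ℝ)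
    (hRderiv : ∀ t ≥ (0:ℝ), HasDerivAt R
      (W t / Real.sqrt (1 + W t ^ 2 + ℓ * (R t)⁻¹ ^ 2)) t)
    (hWderiv : ∀ t ≥ (0:ℝ), HasDerivAt W
      (ℓ / (R t ^ 3 * Real.sqrt (1 + W t ^ 2 + ℓ * (R t)⁻¹ ^ 2))
        + m t (R t) / R t ^ 2) t)
    (hR0 : R 0 = r) (hW0 : W 0 = w)
    (hRpos : ∀ t ≥ (0:ℝ), 0 < R t)
    (hm : ∀ t ≥ (0:ℝ), 0 ≤ m t (R t) ∧ m t (R t) ≤ M)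
    (hWneg : ∀ t ∈ Set.Icc 0 T₀, W t ≤ 0) :
    ∀ t ∈ Set.Icc 0 T₀,
      W t ^ 2 + ℓ * (R t)⁻¹ ^ 2 ≤ w ^ 2 + ℓ * r⁻¹ ^ 2 :=
  kinetic_energy_nonincreasing_general r ℓ w M T₀ R W m hRderiv hWderiv hR0 hW0 hRpos hm hWneg
end

section
/- Let A > 0, B ≥ 0, and let R : [0, T₀] → (0, ∞) be continuously differentiable with Ṙ(t) ≤ 0, R(0) = r > 0, satisfying |½ d/dt (R(t)²)|² ≥ A R(t)² - B whenever R(t)² > B/A. Then for all t ∈ [0, T₀], R(t)² ≤ max{ B/A, r² - 2t√(Ar² - B) + A t² } (assuming Ar² ≥ B). -/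
/-! On the part of `[0, T₀]` where `R t ^ 2 > B / A`, `R` is nonincreasing, so the radicand
`A * R s ^ 2 - B` stays positive on `[0, t]`. There the differential inequality gives
`d/ds √(A R(s)² - B) = A R Ṙ / √(A R² - B) ≤ -A`, and the mean value inequality yields
`√(A R(t)² - B) ≤ √(A r² - B) - A t`, which squares to the claimed bound. -/

open Set

theorem sub_le_mul_sub_of_hasDerivAt_le {f f' : ℝ → ℝ} {a b C : ℝ}
    (hf : ∀ x ∈ Icc a b, HasDerivAt f (f' x) x) (hf' : ∀ x ∈ Icc a b, f' x ≤ C)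
    {x y : ℝ} (hx : x ∈ Icc a b) (hy : y ∈ Icc a b) (hxy : x ≤ y) :
    f y - f x ≤ C * (y - x) := by
  have hint : ∀ z ∈ interior (Icc a b), z ∈ Icc a b := fun z hz => interior_subset hz
  refine (convex_Icc a b).image_sub_le_mul_sub_of_deriv_le
    (fun z hz => (hf z hz).continuousAt.continuousWithinAt)
    (fun z hz => (hf z (hint z hz)).differentiableAt.differentiableWithinAt)
    (fun z hz => ?_) x hx y hy hxy
  rw [(hf z (hint z hz)).deriv]
  exact hf' z (hint z hz)

theorem antitoneOn_of_hasDerivAt_nonpos {f f' : ℝ → ℝ} {a b : ℝ}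
    (hf : ∀ x ∈ Icc a b, HasDerivAt f (f' x) x) (hf' : ∀ x ∈ Icc a b, f' x ≤ 0) :
    AntitoneOn f (Icc a b) := fun x hx y hy hxy => by
  simpa using sub_le_mul_sub_of_hasDerivAt_le hf hf' hx hy hxy

theorem HasDerivAt.sqrt_mul_sq_sub {R : ℝ → ℝ} {R' A B s : ℝ} (hR : HasDerivAt R R' s)
    (hu : A * R s ^ 2 - B ≠ 0) :
    HasDerivAt (fun s => √(A * R s ^ 2 - B)) (A * (R s * R') / √(A * R s ^ 2 - B)) s := by
  convert (((hR.fun_pow 2).const_mul A).sub_const B).sqrt hu using 1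
  field_simp
  ring

theorem mul_div_sqrt_le_neg {A u y : ℝ} (hA : 0 < A) (hy : y ≤ 0) (hu : 0 < u)
    (huy : u ≤ y ^ 2) : A * y / √u ≤ -A := by
  have hyu : y ≤ -√u := le_neg.mpr (Real.sqrt_le_iff.mpr ⟨by linarith, by simpa using huy⟩)
  rw [div_le_iff₀ (Real.sqrt_pos.mpr hu)]
  nlinarith

theorem sq_le_of_sqrt_le_sqrt_sub {A B x r t : ℝ} (hA : 0 < A) (hx : 0 ≤ A * x ^ 2 - B)
    (hr : 0 ≤ A * r ^ 2 - B) (h : √(A * x ^ 2 - B) ≤ √(A * r ^ 2 - B) - A * t) :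
    x ^ 2 ≤ r ^ 2 - 2 * t * √(A * r ^ 2 - B) + A * t ^ 2 := by
  have hsq : A * x ^ 2 - B ≤ (√(A * r ^ 2 - B) - A * t) ^ 2 := by
    rw [← Real.sq_sqrt hx]
    exact pow_le_pow_left₀ (Real.sqrt_nonneg _) h 2
  rw [sub_sq, Real.sq_sqrt hr] at hsq
  nlinarith

theorem ode_comparison_general (A B r T₀ : ℝ) (hA : 0 < A)
    (R R' : ℝ → ℝ)
    (hRderiv : ∀ t ∈ Set.Icc 0 T₀, HasDerivAt R (R' t) t)
    (hR'le : ∀ t ∈ Set.Icc 0 T₀, R' t ≤ 0)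
    (hRpos : ∀ t ∈ Set.Icc 0 T₀, 0 < R t)
    (hR0 : R 0 = r)
    (hineq : ∀ t ∈ Set.Icc 0 T₀, R t ^ 2 > B / A →
      |R t * R' t| ^ 2 ≥ A * R t ^ 2 - B) :
    ∀ t ∈ Set.Icc 0 T₀,
      R t ^ 2 ≤ max (B / A)
        (r ^ 2 - 2 * t * Real.sqrt (A * r ^ 2 - B) + A * t ^ 2) := by
  intro t ht
  rcases le_or_gt (R t ^ 2) (B / A) with hle | hgt
  · exact le_max_of_le_left hle
  refine le_max_of_le_right ?_
  have hanti : AntitoneOn R (Icc 0 T₀) := antitoneOn_of_hasDerivAt_nonpos hRderiv hR'le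
  have hsub : Icc 0 t ⊆ Icc 0 T₀ := Icc_subset_Icc_right ht.2
  have hR_sq_gt : ∀ s ∈ Icc 0 t, B / A < R s ^ 2 := fun s hs =>
    hgt.trans_le (pow_le_pow_left₀ (hRpos t ht).le (hanti (hsub hs) ht hs.2) 2)
  have hradicand_pos : ∀ s ∈ Icc 0 t, 0 < A * R s ^ 2 - B := fun s hs =>
    sub_pos.mpr ((div_lt_iff₀' hA).mp (hR_sq_gt s hs))
  have hsqrt_deriv : ∀ s ∈ Icc 0 t, HasDerivAt (fun s => √(A * R s ^ 2 - B))
      (A * (R s * R' s) / √(A * R s ^ 2 - B)) s := fun s hs =>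
    (hRderiv s (hsub hs)).sqrt_mul_sq_sub (hradicand_pos s hs).ne'
  have hsqrt_deriv_le : ∀ s ∈ Icc 0 t, A * (R s * R' s) / √(A * R s ^ 2 - B) ≤ -A :=
    fun s hs => mul_div_sqrt_le_neg hA
      (mul_nonpos_of_nonneg_of_nonpos (hRpos s (hsub hs)).le (hR'le s (hsub hs)))
      (hradicand_pos s hs) ((hineq s (hsub hs) (hR_sq_gt s hs)).trans_eq (sq_abs _))
  have hmvt := sub_le_mul_sub_of_hasDerivAt_le hsqrt_deriv hsqrt_deriv_le
    (left_mem_Icc.mpr ht.1) (right_mem_Icc.mpr ht.1) ht.1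
  have hr0 := hradicand_pos 0 (left_mem_Icc.mpr ht.1)
  rw [hR0] at hmvt hr0
  exact sq_le_of_sqrt_le_sqrt_sub hA (hradicand_pos t (right_mem_Icc.mpr ht.1)).le hr0.le
    (by linarith)

theorem ode_comparison (A B r T₀ : ℝ) (hA : 0 < A) (hB : 0 ≤ B)
    (hr : 0 < r) (hT : 0 ≤ T₀) (hArB : A * r ^ 2 ≥ B)
    (R R' : ℝ → ℝ)
    (hRderiv : ∀ t ∈ Set.Icc 0 T₀, HasDerivAt R (R' t) t)
    (hR'le : ∀ t ∈ Set.Icc 0 T₀, R' t ≤ 0)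
    (hRpos : ∀ t ∈ Set.Icc 0 T₀, 0 < R t)
    (hR0 : R 0 = r)
    (hineq : ∀ t ∈ Set.Icc 0 T₀, R t ^ 2 > B / A →
      |R t * R' t| ^ 2 ≥ A * R t ^ 2 - B) :
    ∀ t ∈ Set.Icc 0 T₀,
      R t ^ 2 ≤ max (B / A)
        (r ^ 2 - 2 * t * Real.sqrt (A * r ^ 2 - B) + A * t ^ 2) :=
  ode_comparison_general A B r T₀ hA R R' hRderiv hR'le hRpos hR0 hineq
end
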